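/- arXiv:2601.09874 — 5 statements merged into one kernel-verified Lean document; each statement's English description precedes it below -/
import Mathlib

section
/- For any τ ∈ (0,1) and any reals x, t, there exists V with min(τ,1−τ) ≤ V ≤ max(τ,1−τ) such that ρ_τ(x − t) − ρ_τ(x) = −g_τ(x) t + V t². -/
noncomputable def rho (τ x : ℝ) : ℝ := |τ - (if x < 0 then 1 else 0)| * x ^ 2

noncomputable def g (τ x : ℝ) : ℝ := if 0 ≤ x then 2 * τ * x else 2 * (1 - τ) * x

open Set

lemma exists_mem_Icc_sq_eq_mul_sq {y t : ℝ} (h : y ^ 2 ≤ t ^ 2) :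
    ∃ l ∈ Icc (0 : ℝ) 1, y ^ 2 = l * t ^ 2 := by
  rcases eq_or_ne t 0 with rfl | ht
  · exact ⟨0, left_mem_Icc.mpr zero_le_one, by nlinarith⟩
  have ht2 : 0 < t ^ 2 := by positivity
  exact ⟨y ^ 2 / t ^ 2, ⟨by positivity, (div_le_one ht2).mpr h⟩, by field_simp⟩

/-- The remainder is `a * t ^ 2 + (b - a) * (x - t) ^ 2`; when `a ≠ b`, the points `x` and `x - t`
lie on opposite sides of `0`, so `(x - t) ^ 2 ≤ t ^ 2` and the remainder is `t ^ 2` times a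
point between `a` and `b`. -/
lemma exists_weighted_sq_sub_eq {s : Set ℝ} (hs : Convex ℝ s) {a b x t : ℝ} (ha : a ∈ s)
    (hb : b ∈ s) (hsign : a ≠ b → x * (x - t) ≤ 0) :
    ∃ V ∈ s, b * (x - t) ^ 2 - a * x ^ 2 = -(2 * a * x) * t + V * t ^ 2 := by
  by_cases hab : a = b
  · subst hab
    exact ⟨a, ha, by ring⟩
  have hle : (x - t) ^ 2 ≤ t ^ 2 := by nlinarith [hsign hab]
  obtain ⟨l, hl, hyl⟩ := exists_mem_Icc_sq_eq_mul_sq hle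
  refine ⟨a + l • (b - a), hs.add_smul_sub_mem ha hb hl, ?_⟩
  rw [smul_eq_mul]
  linear_combination (b - a) * hyl

/-- The weight `|τ - 1_{x<0}|` of the expectile loss, for `τ ∈ (0, 1)`. -/
noncomputable def expectileWeight (τ x : ℝ) : ℝ := if x < 0 then 1 - τ else τ

lemma expectileWeight_mem_Icc (τ x : ℝ) :
    expectileWeight τ x ∈ Icc (min τ (1 - τ)) (max τ (1 - τ)) := by
  unfold expectileWeight
  split_ifs
  · exact ⟨min_le_right _ _, le_max_right _ _⟩
  · exact ⟨min_le_left _ _, le_max_left _ _⟩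

lemma mul_nonpos_of_expectileWeight_ne {τ x y : ℝ}
    (h : expectileWeight τ x ≠ expectileWeight τ y) : x * y ≤ 0 := by
  unfold expectileWeight at h
  split_ifs at h
  · exact absurd rfl h
  · nlinarith
  · nlinarith
  · exact absurd rfl h

lemma rho_eq_expectileWeight_mul_sq {τ : ℝ} (hτ : τ ∈ Ioo (0 : ℝ) 1) (x : ℝ) :
    rho τ x = expectileWeight τ x * x ^ 2 := by
  unfold rho expectileWeight
  split_ifs
  · rw [abs_of_neg (by linarith [hτ.2]), neg_sub]
  · rw [sub_zero, abs_of_pos hτ.1]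

lemma g_eq_two_mul_expectileWeight_mul (τ x : ℝ) : g τ x = 2 * expectileWeight τ x * x := by
  unfold g expectileWeight
  split_ifs <;> first | rfl | linarith

theorem expectile_loss_taylor (τ : ℝ) (hτ : τ ∈ Set.Ioo (0 : ℝ) 1) (x t : ℝ) :
    ∃ V : ℝ, min τ (1 - τ) ≤ V ∧ V ≤ max τ (1 - τ) ∧
      rho τ (x - t) - rho τ x = -(g τ x) * t + V * t ^ 2 := by
  obtain ⟨V, hV, hVeq⟩ := exists_weighted_sq_sub_eq (convex_Icc _ _)
    (expectileWeight_mem_Icc τ x) (expectileWeight_mem_Icc τ (x - t))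
    mul_nonpos_of_expectileWeight_ne
  refine ⟨V, hV.1, hV.2, ?_⟩
  rw [rho_eq_expectileWeight_mul_sq hτ, rho_eq_expectileWeight_mul_sq hτ,
    g_eq_two_mul_expectileWeight_mul]
  exact hVeq
end

section
/- Let ε be a real random variable with E[ε²] < ∞ and fix τ ∈ (0,1). Then the map t ↦ E[ρ_τ(ε − t)] is differentiable at every t ∈ ℝ with derivative −E[g_τ(ε − t)]. -/
open MeasureTheory

/-!
On each half-line the check loss `rho τ` is a multiple of `x ^ 2`, with one-sided derivatives
that agree at `0`, so it is differentiable with derivative `g τ`, and `|g τ x| ≤ 2 |x|`.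
Since `ε` is integrable, `2 (|ε| + |t| + 1)` dominates `g τ (ε - s)` for `s` near `t`,
and differentiation under the integral sign gives the claim.
-/

open Set

theorem hasDerivAt_integral_comp_sub {Ω : Type*} [MeasurableSpace Ω] {μ : Measure Ω}
    [IsFiniteMeasure μ] {f f' : ℝ → ℝ} {C : ℝ}
    (hf : ∀ x, HasDerivAt f (f' x) x) (hf' : ∀ x, |f' x| ≤ C * |x|)
    {ε : Ω → ℝ} (hε_meas : Measurable ε) (hε : Integrable ε μ) {t : ℝ}
    (hf_int : Integrable (fun ω => f (ε ω - t)) μ) :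
    HasDerivAt (fun s => ∫ ω, f (ε ω - s) ∂μ) (-∫ ω, f' (ε ω - t) ∂μ) t := by
  have hf_meas : Measurable f :=
    (Differentiable.continuous fun x => (hf x).differentiableAt).measurable
  have hf'_meas : Measurable f' := funext (fun x => (hf x).deriv) ▸ measurable_deriv f
  have hC : 0 ≤ C := (abs_nonneg _).trans (by simpa using hf' 1)
  have h_bound :
      ∀ ω, ∀ s ∈ Metric.ball t 1, ‖-f' (ε ω - s)‖ ≤ C * (|ε ω| + |t| + 1) := by
    intro ω s hs
    have hst : |s - t| < 1 := by simpa [Real.dist_eq] using hs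
    have hεs : |ε ω - s| ≤ |ε ω| + |t| + 1 := by
      have := abs_sub_abs_le_abs_sub s t
      linarith [abs_sub (ε ω) s]
    calc ‖-f' (ε ω - s)‖ = |f' (ε ω - s)| := by rw [norm_neg, Real.norm_eq_abs]
      _ ≤ C * |ε ω - s| := hf' _
      _ ≤ C * (|ε ω| + |t| + 1) := by gcongr
  have h_diff : ∀ ω, ∀ s ∈ Metric.ball t 1,
      HasDerivAt (fun s => f (ε ω - s)) (-f' (ε ω - s)) s := by
    intro ω s _
    simpa [Function.comp_def] using (hf (ε ω - s)).comp s ((hasDerivAt_id s).const_sub (ε ω))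
  have key := hasDerivAt_integral_of_dominated_loc_of_deriv_le (F := fun s ω => f (ε ω - s))
    (Metric.ball_mem_nhds t one_pos)
    (.of_forall fun s => (hf_meas.comp (hε_meas.sub measurable_const)).aestronglyMeasurable)
    hf_int (hf'_meas.comp (hε_meas.sub measurable_const)).neg.aestronglyMeasurable
    (.of_forall h_bound) (((hε.abs.add (integrable_const _)).add (integrable_const _)).const_mul C)
    (.of_forall h_diff)
  simpa only [integral_neg] using key.2

section CheckLoss

variable {τ : ℝ}

theorem rho_of_nonneg {x : ℝ} (hx : 0 ≤ x) : rho τ x = |τ| * x ^ 2 := by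
  simp [rho, not_lt.2 hx]

theorem rho_of_nonpos {x : ℝ} (hx : x ≤ 0) : rho τ x = |1 - τ| * x ^ 2 := by
  rcases hx.lt_or_eq with hx | rfl
  · simp [rho, hx, abs_sub_comm]
  · simp [rho]

theorem g_of_nonneg {x : ℝ} (hx : 0 ≤ x) : g τ x = 2 * τ * x := if_pos hx

theorem g_of_nonpos {x : ℝ} (hx : x ≤ 0) : g τ x = 2 * (1 - τ) * x := by
  rcases hx.lt_or_eq with hx | rfl
  · exact if_neg (not_le.2 hx)
  · simp [g]

variable (hτ : τ ∈ Icc (0 : ℝ) 1)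
include hτ

theorem hasDerivWithinAt_rho_Ici {x : ℝ} (hx : 0 ≤ x) :
    HasDerivWithinAt (rho τ) (g τ x) (Ici 0) x := by
  have h := ((hasDerivAt_pow 2 x).const_mul τ).hasDerivWithinAt (s := Ici 0)
  rw [g_of_nonneg hx]
  refine (h.congr (fun y hy => ?_) ?_).congr_deriv (by ring)
  · rw [rho_of_nonneg hy, abs_of_nonneg hτ.1]
  · rw [rho_of_nonneg hx, abs_of_nonneg hτ.1]

theorem hasDerivWithinAt_rho_Iic {x : ℝ} (hx : x ≤ 0) :
    HasDerivWithinAt (rho τ) (g τ x) (Iic 0) x := by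
  have h := ((hasDerivAt_pow 2 x).const_mul (1 - τ)).hasDerivWithinAt (s := Iic 0)
  rw [g_of_nonpos hx]
  refine (h.congr (fun y hy => ?_) ?_).congr_deriv (by ring)
  · rw [rho_of_nonpos hy, abs_of_nonneg (sub_nonneg.2 hτ.2)]
  · rw [rho_of_nonpos hx, abs_of_nonneg (sub_nonneg.2 hτ.2)]

theorem hasDerivAt_rho (x : ℝ) : HasDerivAt (rho τ) (g τ x) x := by
  rcases lt_trichotomy x 0 with hx | rfl | hx
  · exact (hasDerivWithinAt_rho_Iic hτ hx.le).hasDerivAt (Iic_mem_nhds hx)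
  · have h := (hasDerivWithinAt_rho_Iic hτ le_rfl).union (hasDerivWithinAt_rho_Ici hτ le_rfl)
    rwa [Iic_union_Ici, hasDerivWithinAt_univ] at h
  · exact (hasDerivWithinAt_rho_Ici hτ hx.le).hasDerivAt (Ici_mem_nhds hx)

theorem differentiable_rho : Differentiable ℝ (rho τ) :=
  fun x => (hasDerivAt_rho hτ x).differentiableAt

theorem abs_rho_le_sq (x : ℝ) : |rho τ x| ≤ x ^ 2 := by
  have hw : |τ - (if x < 0 then 1 else 0)| ≤ 1 := by
    obtain ⟨h0, h1⟩ := hτ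
    split_ifs <;> exact abs_le.2 ⟨by linarith, by linarith⟩
  rw [rho, abs_mul, abs_abs, abs_of_nonneg (sq_nonneg x)]
  exact mul_le_of_le_one_left (sq_nonneg x) hw

theorem abs_g_le (x : ℝ) : |g τ x| ≤ 2 * |x| := by
  obtain ⟨h0, h1⟩ := hτ
  rcases le_total 0 x with hx | hx
  · rw [g_of_nonneg hx, abs_mul, abs_of_nonneg (by positivity : 0 ≤ 2 * τ)]
    exact mul_le_mul_of_nonneg_right (by linarith) (abs_nonneg x)
  · rw [g_of_nonpos hx, abs_mul, abs_of_nonneg (by linarith : 0 ≤ 2 * (1 - τ))]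
    exact mul_le_mul_of_nonneg_right (by linarith) (abs_nonneg x)

end CheckLoss

theorem expected_loss_hasDerivAt {Ω : Type*} [MeasurableSpace Ω]
    (μ : Measure Ω) [IsProbabilityMeasure μ] (ε : Ω → ℝ) (hmeas : Measurable ε)
    (hint : Integrable (fun ω => (ε ω) ^ 2) μ)
    (τ : ℝ) (hτ : τ ∈ Set.Ioo (0 : ℝ) 1) (t : ℝ) :
    HasDerivAt (fun s => ∫ ω, rho τ (ε ω - s) ∂μ)
      (-(∫ ω, g τ (ε ω - t) ∂μ)) t := by
  have hτ' : τ ∈ Icc (0 : ℝ) 1 := Ioo_subset_Icc_self hτ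
  have hε2 : MemLp ε 2 μ := (memLp_two_iff_integrable_sq hmeas.aestronglyMeasurable).2 hint
  have hrho_int : Integrable (fun ω => rho τ (ε ω - t)) μ := by
    refine (hε2.sub (memLp_const t)).integrable_sq.mono'
      ((differentiable_rho hτ').continuous.measurable.comp
        (hmeas.sub measurable_const)).aestronglyMeasurable ?_
    exact .of_forall fun ω => abs_rho_le_sq hτ' (ε ω - t)
  exact hasDerivAt_integral_comp_sub (hasDerivAt_rho hτ') (abs_g_le hτ') hmeas
    (hε2.integrable one_le_two) hrho_int
end

section
/- Let ε be a real random variable with E[ε²] < ∞, fix τ ∈ (0,1), and suppose E[g_τ(ε)] = 0. Then for every real t, min(τ,1−τ) t² ≤ E[ρ_τ(ε − t)] − E[ρ_τ(ε)] ≤ max(τ,1−τ) t². -/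
open MeasureTheory

lemma pointwise_bounds (τ t x : ℝ) (hτ : τ ∈ Set.Ioo (0 : ℝ) 1) :
    min τ (1 - τ) * t ^ 2 ≤ rho τ (x - t) - rho τ x + t * g τ x ∧
    rho τ (x - t) - rho τ x + t * g τ x ≤ max τ (1 - τ) * t ^ 2 := by
  obtain ⟨h0, h1⟩ := hτ
  have habs1 : |τ - (1:ℝ)| = 1 - τ := by rw [abs_of_nonpos (by linarith)]; ring
  have habs2 : |τ - (0:ℝ)| = τ := by rw [sub_zero, abs_of_pos h0]
  rcases lt_or_ge x 0 with hx | hx <;> rcases lt_or_ge (x - t) 0 with hxt | hxt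
  · simp only [rho, g, if_pos hx, if_pos hxt, if_neg (not_le.mpr hx), habs1]
    rcases le_total τ (1 - τ) with hc | hc <;>
      [rw [min_eq_left hc, max_eq_right hc]; rw [min_eq_right hc, max_eq_left hc]] <;>
      constructor <;> nlinarith [sq_nonneg t]
  · have h2 : (x - t) ^ 2 ≤ t ^ 2 := by nlinarith
    simp only [rho, g, if_pos hx, if_neg (not_lt.mpr hxt), if_neg (not_le.mpr hx), habs1, habs2]
    rcases le_total τ (1 - τ) with hc | hc <;>
      [rw [min_eq_left hc, max_eq_right hc]; rw [min_eq_right hc, max_eq_left hc]] <;>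
      constructor <;> nlinarith [sq_nonneg (x - t), sq_nonneg t, h2]
  · have h2 : (x - t) ^ 2 ≤ t ^ 2 := by nlinarith
    simp only [rho, g, if_neg (not_lt.mpr hx), if_pos hxt, if_pos hx, habs1, habs2]
    rcases le_total τ (1 - τ) with hc | hc <;>
      [rw [min_eq_left hc, max_eq_right hc]; rw [min_eq_right hc, max_eq_left hc]] <;>
      constructor <;> nlinarith [sq_nonneg (x - t), sq_nonneg t, h2]
  · simp only [rho, g, if_neg (not_lt.mpr hx), if_neg (not_lt.mpr hxt), if_pos hx, habs2]
    rcases le_total τ (1 - τ) with hc | hc <;>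
      [rw [min_eq_left hc, max_eq_right hc]; rw [min_eq_right hc, max_eq_left hc]] <;>
      constructor <;> nlinarith [sq_nonneg t]

lemma abs_rho_le (τ x : ℝ) (hτ : τ ∈ Set.Ioo (0 : ℝ) 1) : |rho τ x| ≤ x ^ 2 := by
  obtain ⟨h0, h1⟩ := hτ
  have hnn : 0 ≤ rho τ x := by rw [rho]; positivity
  rw [abs_of_nonneg hnn, rho]
  rcases lt_or_ge x 0 with hx | hx
  · rw [if_pos hx, abs_of_nonpos (by linarith : τ - 1 ≤ 0)]; nlinarith [sq_nonneg x]
  · rw [if_neg (not_lt.mpr hx), sub_zero, abs_of_pos h0]; nlinarith [sq_nonneg x]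

lemma abs_g_le_s9 (τ x : ℝ) (hτ : τ ∈ Set.Ioo (0 : ℝ) 1) : |g τ x| ≤ x ^ 2 + 1 := by
  obtain ⟨h0, h1⟩ := hτ
  have h2 : 2 * |x| ≤ x ^ 2 + 1 := by nlinarith [sq_nonneg (|x| - 1), sq_abs x]
  rw [g]
  rcases le_or_gt 0 x with hx | hx
  · rw [if_pos hx, abs_mul, abs_of_pos (by linarith : (0:ℝ) < 2 * τ)]
    calc 2 * τ * |x| ≤ 2 * |x| := by nlinarith [abs_nonneg x]
      _ ≤ x ^ 2 + 1 := h2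
  · rw [if_neg (not_le.mpr hx), abs_mul, abs_of_pos (by linarith : (0:ℝ) < 2 * (1 - τ))]
    calc 2 * (1 - τ) * |x| ≤ 2 * |x| := by nlinarith [abs_nonneg x]
      _ ≤ x ^ 2 + 1 := h2

lemma meas_rho (τ : ℝ) : Measurable (rho τ) := by
  unfold rho
  exact ((measurable_const.sub ((measurable_const.ite (measurableSet_lt measurable_id
    measurable_const) measurable_const))).abs).mul (measurable_id.pow_const 2)

lemma meas_g (τ : ℝ) : Measurable (g τ) := by
  unfold g
  exact Measurable.ite (measurableSet_le measurable_const measurable_id)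
    (measurable_const.mul measurable_id) (measurable_const.mul measurable_id)

theorem expected_loss_quadratic_bounds {Ω : Type*} [MeasurableSpace Ω]
    (μ : Measure Ω) [IsProbabilityMeasure μ] (ε : Ω → ℝ) (hmeas : Measurable ε)
    (hint : Integrable (fun ω => (ε ω) ^ 2) μ)
    (τ : ℝ) (hτ : τ ∈ Set.Ioo (0 : ℝ) 1)
    (hexp : (∫ ω, g τ (ε ω) ∂μ) = 0) (t : ℝ) :
    min τ (1 - τ) * t ^ 2 ≤ (∫ ω, rho τ (ε ω - t) ∂μ) - (∫ ω, rho τ (ε ω) ∂μ) ∧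
    (∫ ω, rho τ (ε ω - t) ∂μ) - (∫ ω, rho τ (ε ω) ∂μ) ≤ max τ (1 - τ) * t ^ 2 := by
  have hf2 : Integrable (fun ω => rho τ (ε ω)) μ := by
    refine hint.mono ((meas_rho τ).comp hmeas).aestronglyMeasurable (ae_of_all _ fun ω => ?_)
    simp only [Real.norm_eq_abs, abs_pow, sq_abs]
    exact abs_rho_le τ _ hτ
  have hb1 : Integrable (fun ω => 2 * ε ω ^ 2 + 2 * t ^ 2) μ := by
    exact (hint.const_mul 2).add (integrable_const (2 * t ^ 2))
  have hf1 : Integrable (fun ω => rho τ (ε ω - t)) μ := by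
    refine hb1.mono (((meas_rho τ).comp (hmeas.sub measurable_const)).aestronglyMeasurable)
      (ae_of_all _ fun ω => ?_)
    have h1 := abs_rho_le τ (ε ω - t) hτ
    have h2 : (ε ω - t) ^ 2 ≤ 2 * ε ω ^ 2 + 2 * t ^ 2 := by nlinarith [sq_nonneg (ε ω + t)]
    have h3 : (0:ℝ) ≤ 2 * ε ω ^ 2 + 2 * t ^ 2 := by positivity
    simp only [Real.norm_eq_abs]
    rw [abs_of_nonneg h3]; linarith
  have hb3 : Integrable (fun ω => ε ω ^ 2 + 1) μ := hint.add (integrable_const 1)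
  have hf3 : Integrable (fun ω => g τ (ε ω)) μ := by
    refine hb3.mono ((meas_g τ).comp hmeas).aestronglyMeasurable (ae_of_all _ fun ω => ?_)
    have h3 : (0:ℝ) ≤ ε ω ^ 2 + 1 := by positivity
    simp only [Real.norm_eq_abs]
    rw [abs_of_nonneg h3]; exact abs_g_le_s9 τ _ hτ
  have h12 : Integrable (fun ω => rho τ (ε ω - t) - rho τ (ε ω)) μ := hf1.sub hf2
  have ht3 : Integrable (fun ω => t * g τ (ε ω)) μ := hf3.const_mul t
  have hsum : Integrable (fun ω => rho τ (ε ω - t) - rho τ (ε ω) + t * g τ (ε ω)) μ :=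
    h12.add ht3
  have key : ∫ ω, (rho τ (ε ω - t) - rho τ (ε ω) + t * g τ (ε ω)) ∂μ =
      (∫ ω, rho τ (ε ω - t) ∂μ) - (∫ ω, rho τ (ε ω) ∂μ) := by
    rw [integral_add h12 ht3, integral_sub hf1 hf2,
      MeasureTheory.integral_const_mul, hexp]
    ring
  constructor
  · have := integral_mono (integrable_const (min τ (1 - τ) * t ^ 2)) hsum
      (fun ω => (pointwise_bounds τ t (ε ω) hτ).1)
    simpa [key] using this
  · have := integral_mono hsum (integrable_const (max τ (1 - τ) * t ^ 2))
      (fun ω => (pointwise_bounds τ t (ε ω) hτ).2)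
    simpa [key] using this
end

section
/- Fix τ ∈ (0,1). For any reals x and t, ρ_τ(x − t) − ρ_τ(x) + g_τ(x) t ≤ max(τ, 1−τ) t², and also ρ_τ(x − t) − ρ_τ(x) + g_τ(x) t ≥ min(τ, 1−τ) t² ≥ 0; in particular the remainder in the first-order expansion of ρ_τ is nonnegative. -/
theorem first_order_remainder_bounds (τ : ℝ) (hτ : τ ∈ Set.Ioo (0 : ℝ) 1) (x t : ℝ) :
    rho τ (x - t) - rho τ x + g τ x * t ≤ max τ (1 - τ) * t ^ 2 ∧
    min τ (1 - τ) * t ^ 2 ≤ rho τ (x - t) - rho τ x + g τ x * t ∧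
    0 ≤ rho τ (x - t) - rho τ x + g τ x * t := by
  obtain ⟨h0, h1⟩ := hτ
  have habs1 : |τ - (1:ℝ)| = 1 - τ := by rw [abs_of_neg (by linarith)]; ring
  have habs0 : |τ - (0:ℝ)| = τ := by rw [sub_zero, abs_of_pos h0]
  have hmin : min τ (1 - τ) ≤ τ := min_le_left _ _
  have hmin' : min τ (1 - τ) ≤ 1 - τ := min_le_right _ _
  have hmax : τ ≤ max τ (1 - τ) := le_max_left _ _
  have hmax' : 1 - τ ≤ max τ (1 - τ) := le_max_right _ _
  have ht2 : (0:ℝ) ≤ t ^ 2 := sq_nonneg t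
  unfold rho g
  rcases lt_or_ge x 0 with hx | hx <;> rcases lt_or_ge (x - t) 0 with hxt | hxt
  · simp only [if_pos hx, if_pos hxt, if_neg (not_le.mpr hx), habs1]
    have hR : (1 - τ) * (x - t) ^ 2 - (1 - τ) * x ^ 2 + 2 * (1 - τ) * x * t
        = (1 - τ) * t ^ 2 := by ring
    rw [hR]
    refine ⟨by nlinarith, by nlinarith, by nlinarith⟩
  · simp only [if_pos hx, if_neg (not_lt.mpr hxt), if_neg (not_le.mpr hx), habs1, habs0]
    have hle : (x - t) ^ 2 ≤ t ^ 2 := by nlinarith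
    have hR : τ * (x - t) ^ 2 - (1 - τ) * x ^ 2 + 2 * (1 - τ) * x * t
        = (1 - τ) * t ^ 2 + (2 * τ - 1) * (x - t) ^ 2 := by ring
    rw [hR]
    rcases le_total τ (1 - τ) with h | h <;>
      simp only [max_eq_right h, max_eq_left h, min_eq_left h, min_eq_right h] <;>
      refine ⟨by nlinarith [sq_nonneg (x - t)], by nlinarith [sq_nonneg (x - t)],
        by nlinarith [sq_nonneg (x - t)]⟩
  · simp only [if_neg (not_lt.mpr hx), if_pos hxt, if_pos hx, habs1, habs0]
    have hle : (x - t) ^ 2 ≤ t ^ 2 := by nlinarith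
    have hR : (1 - τ) * (x - t) ^ 2 - τ * x ^ 2 + 2 * τ * x * t
        = τ * t ^ 2 + (1 - 2 * τ) * (x - t) ^ 2 := by ring
    rw [hR]
    rcases le_total τ (1 - τ) with h | h <;>
      simp only [max_eq_right h, max_eq_left h, min_eq_left h, min_eq_right h] <;>
      refine ⟨by nlinarith [sq_nonneg (x - t)], by nlinarith [sq_nonneg (x - t)],
        by nlinarith [sq_nonneg (x - t)]⟩
  · simp only [if_neg (not_lt.mpr hx), if_neg (not_lt.mpr hxt), if_pos hx, habs0]
    have hR : τ * (x - t) ^ 2 - τ * x ^ 2 + 2 * τ * x * t = τ * t ^ 2 := by ring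
    rw [hR]
    refine ⟨by nlinarith, by nlinarith, by nlinarith⟩
end

section
/- Let ε have E[ε²] < ∞ and τ ∈ (0,1) with E[g_τ(ε)] = 0. Define h_τ(x) = 2τ 1_{x≥0} + 2(1−τ) 1_{x<0}. If additionally P(ε = 0) = 0 and the distribution function of ε is continuous at 0, then E[ρ_τ(ε − t)] − E[ρ_τ(ε)] = (1/2) E[h_τ(ε)] t² + o(t²) as t → 0. -/
open MeasureTheory Asymptotics Filter

noncomputable def h (τ x : ℝ) : ℝ := if 0 ≤ x then 2 * τ else 2 * (1 - τ)

/-!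
For `τ ∈ [0, 1]` we have `ρ_τ(x) = h_τ(x) x² / 2` and `g_τ(x) = h_τ(x) x`, so the second-order
Taylor remainder `ρ_τ(x - t) - ρ_τ(x) + g_τ(x) t - h_τ(x) t² / 2` equals
`(h_τ(x - t) - h_τ(x)) (x - t)² / 2`. It vanishes unless `x` and `x - t` lie on different sides
of `0`, which forces `|x| ≤ |t|`, and it is always at most `4 t²`. Since `E g_τ(ε) = 0`, the
quantity in question is the expected remainder, hence at most `4 t² P(|ε| ≤ |t|)`, and
`P(|ε| ≤ |t|) → P(ε = 0) = 0` by continuity of measure.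
-/

open Set Topology

noncomputable def rhoTaylorRemainder (τ t x : ℝ) : ℝ :=
  rho τ (x - t) - rho τ x + g τ x * t - 1 / 2 * h τ x * t ^ 2

section Pointwise

variable {τ : ℝ}

theorem g_eq_h_mul (τ x : ℝ) : g τ x = h τ x * x := by
  unfold g h
  split_ifs <;> ring

theorem rho_eq_h_mul (hτ : τ ∈ Icc 0 1) (x : ℝ) : rho τ x = h τ x * (x ^ 2 / 2) := by
  obtain ⟨hτ0, hτ1⟩ := hτ
  unfold rho h
  split_ifs
  · linarith
  · rw [abs_of_nonpos (by linarith)]; ring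
  · rw [sub_zero, abs_of_nonneg hτ0]; ring
  · linarith

theorem h_mem_Icc (hτ : τ ∈ Icc 0 1) (x : ℝ) : h τ x ∈ Icc 0 2 := by
  obtain ⟨hτ0, hτ1⟩ := hτ
  unfold h
  split_ifs <;> constructor <;> linarith

theorem h_sub_eq_of_abs_lt {t x : ℝ} (htx : |t| < |x|) : h τ (x - t) = h τ x := by
  unfold h
  rcases le_or_gt 0 x with hx | hx
  · rw [abs_of_nonneg hx] at htx
    rw [if_pos hx, if_pos (by linarith [le_abs_self t])]
  · rw [abs_of_neg hx] at htx
    rw [if_neg (not_le.2 hx), if_neg (by linarith [neg_abs_le t])]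

theorem rhoTaylorRemainder_eq (hτ : τ ∈ Icc 0 1) (t x : ℝ) :
    rhoTaylorRemainder τ t x = (h τ (x - t) - h τ x) * (x - t) ^ 2 / 2 := by
  rw [rhoTaylorRemainder, rho_eq_h_mul hτ, rho_eq_h_mul hτ, g_eq_h_mul]
  ring

theorem abs_rhoTaylorRemainder_le (hτ : τ ∈ Icc 0 1) (t x : ℝ) :
    |rhoTaylorRemainder τ t x| ≤ {y : ℝ | |y| ≤ |t|}.indicator (fun _ => 4 * t ^ 2) x := by
  rw [rhoTaylorRemainder_eq hτ]
  by_cases hx : x ∈ {y : ℝ | |y| ≤ |t|}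
  · rw [indicator_of_mem hx]
    have hjump : |h τ (x - t) - h τ x| ≤ 2 :=
      abs_sub_le_of_nonneg_of_le (h_mem_Icc hτ _).1 (h_mem_Icc hτ _).2
        (h_mem_Icc hτ _).1 (h_mem_Icc hτ _).2
    have hsq : (x - t) ^ 2 ≤ 4 * t ^ 2 := by
      have : |x - t| ≤ 2 * |t| := (abs_sub x t).trans (by linarith [show |x| ≤ |t| from hx])
      nlinarith [abs_nonneg (x - t), sq_abs (x - t), sq_abs t]
    rw [abs_div, abs_mul, abs_of_nonneg (sq_nonneg (x - t)), abs_two]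
    nlinarith [sq_nonneg (x - t)]
  · rw [indicator_of_notMem hx, h_sub_eq_of_abs_lt (not_le.1 hx)]
    simp

end Pointwise

theorem measurable_h (τ : ℝ) : Measurable (h τ) :=
  Measurable.ite measurableSet_Ici measurable_const measurable_const

section Integral

variable {Ω : Type*} [MeasurableSpace Ω] {μ : Measure Ω} {ε : Ω → ℝ} {τ : ℝ}

theorem integrable_h_comp_mul (hτ : τ ∈ Icc 0 1) (hε : Measurable ε) {f : Ω → ℝ}
    (hf : Integrable f μ) : Integrable (fun ω => h τ (ε ω) * f ω) μ :=
  hf.bdd_mul ((measurable_h τ).comp hε).aestronglyMeasurable (c := 2) <| ae_of_all _ fun ω => by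
    rw [Real.norm_eq_abs, abs_of_nonneg (h_mem_Icc hτ _).1]
    exact (h_mem_Icc hτ _).2

variable [IsFiniteMeasure μ]

theorem integral_rhoTaylorRemainder (hτ : τ ∈ Icc 0 1) (hε : Measurable ε)
    (hε2 : MemLp ε 2 μ) (t : ℝ) :
    ∫ ω, rhoTaylorRemainder τ t (ε ω) ∂μ = (∫ ω, rho τ (ε ω - t) ∂μ) - (∫ ω, rho τ (ε ω) ∂μ)
      + (∫ ω, g τ (ε ω) ∂μ) * t - 1 / 2 * (∫ ω, h τ (ε ω) ∂μ) * t ^ 2 := by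
  have hrho (s : ℝ) : Integrable (fun ω => rho τ (ε ω - s)) μ := by
    simp_rw [rho_eq_h_mul hτ]
    exact integrable_h_comp_mul hτ (hε.sub_const s)
      ((hε2.sub (memLp_const s)).integrable_sq.div_const 2)
  have hrho0 : Integrable (fun ω => rho τ (ε ω)) μ := by simpa using hrho 0
  have hg : Integrable (fun ω => g τ (ε ω)) μ := by
    simp_rw [g_eq_h_mul]
    exact integrable_h_comp_mul hτ hε (hε2.integrable one_le_two)
  have hh : Integrable (fun ω => h τ (ε ω)) μ := by
    simpa using integrable_h_comp_mul hτ hε (integrable_const (1 : ℝ) (μ := μ))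
  simp only [rhoTaylorRemainder]
  rw [integral_sub ?_ ((hh.const_mul _).mul_const _), integral_add ?_ (hg.mul_const t),
    integral_sub (hrho t) hrho0, integral_mul_const, integral_mul_const, integral_const_mul]
  exacts [(hrho t).sub hrho0, ((hrho t).sub hrho0).add (hg.mul_const t)]

theorem abs_integral_rhoTaylorRemainder_le (hτ : τ ∈ Icc 0 1) (hε : Measurable ε) (t : ℝ) :
    |∫ ω, rhoTaylorRemainder τ t (ε ω) ∂μ| ≤ 4 * t ^ 2 * μ.real {ω | |ε ω| ≤ |t|} := by
  have hS : MeasurableSet {ω | |ε ω| ≤ |t|} := measurableSet_le hε.abs measurable_const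
  calc |∫ ω, rhoTaylorRemainder τ t (ε ω) ∂μ|
      ≤ ∫ ω, {ω | |ε ω| ≤ |t|}.indicator (fun _ => 4 * t ^ 2) ω ∂μ := by
        rw [← Real.norm_eq_abs]
        exact norm_integral_le_of_norm_le ((integrable_const _).indicator hS)
          (ae_of_all _ fun ω => abs_rhoTaylorRemainder_le hτ t (ε ω))
    _ = 4 * t ^ 2 * μ.real {ω | |ε ω| ≤ |t|} := by
        rw [integral_indicator_const _ hS, smul_eq_mul, mul_comm]

theorem tendsto_measureReal_abs_le_abs (hε : Measurable ε) (hzero : μ {ω | ε ω = 0} = 0) :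
    Tendsto (fun t : ℝ => μ.real {ω | |ε ω| ≤ |t|}) (𝓝 0) (𝓝 0) := by
  have hball : Tendsto (fun r => μ.map ε (Metric.cthickening r {0})) (𝓝 0) (𝓝 (μ.map ε {0})) :=
    tendsto_measure_cthickening_of_isClosed ⟨1, one_pos, measure_ne_top _ _⟩ isClosed_singleton
  have hatom : μ.map ε {0} = 0 := by
    rw [Measure.map_apply hε (measurableSet_singleton 0)]
    exact hzero
  have habs : Tendsto (fun t : ℝ => |t|) (𝓝 0) (𝓝 0) := by
    simpa using continuous_abs.tendsto (0 : ℝ)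
  refine ((ENNReal.tendsto_toReal ENNReal.zero_ne_top).comp ((hatom ▸ hball).comp habs)).congr
    fun t => ?_
  simp only [Function.comp_apply, Metric.cthickening_singleton _ (abs_nonneg t),
    Measure.map_apply hε measurableSet_closedBall, Measure.real]
  congr 2
  ext ω
  simp

end Integral

theorem expected_loss_second_order_general {Ω : Type*} [MeasurableSpace Ω]
    (μ : Measure Ω) [IsProbabilityMeasure μ] (ε : Ω → ℝ) (hmeas : Measurable ε)
    (hint : Integrable (fun ω => (ε ω) ^ 2) μ)
    (τ : ℝ) (hτ : τ ∈ Set.Ioo (0 : ℝ) 1)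
    (hexp : (∫ ω, g τ (ε ω) ∂μ) = 0)
    (hzero : μ {ω | ε ω = 0} = 0) :
    (fun t : ℝ => (∫ ω, rho τ (ε ω - t) ∂μ) - (∫ ω, rho τ (ε ω) ∂μ)
        - (1 / 2) * (∫ ω, h τ (ε ω) ∂μ) * t ^ 2)
      =o[nhds 0] fun t : ℝ => t ^ 2 := by
  have hτ' : τ ∈ Icc (0 : ℝ) 1 := Ioo_subset_Icc_self hτ
  have hε2 : MemLp ε 2 μ := (memLp_two_iff_integrable_sq hmeas.aestronglyMeasurable).2 hint
  have hmass : Tendsto (fun t : ℝ => 4 * μ.real {ω | |ε ω| ≤ |t|}) (𝓝 0) (𝓝 0) := by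
    simpa using (tendsto_measureReal_abs_le_abs hmeas hzero).const_mul 4
  have hbound : (fun t : ℝ => 4 * μ.real {ω | |ε ω| ≤ |t|} * t ^ 2) =o[𝓝 0] fun t => t ^ 2 := by
    simpa using ((isLittleO_one_iff ℝ).2 hmass).mul_isBigO (isBigO_refl (fun t : ℝ => t ^ 2) _)
  refine IsBigO.trans_isLittleO (IsBigO.of_bound' (Eventually.of_forall fun t => ?_)) hbound
  have hremainder := integral_rhoTaylorRemainder hτ' hmeas hε2 t
  rw [hexp, zero_mul, add_zero] at hremainder
  rw [Real.norm_eq_abs, Real.norm_eq_abs, ← hremainder,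
    abs_of_nonneg (mul_nonneg (mul_nonneg zero_le_four measureReal_nonneg) (sq_nonneg t))]
  exact (abs_integral_rhoTaylorRemainder_le hτ' hmeas t).trans_eq (by ring)

theorem expected_loss_second_order {Ω : Type*} [MeasurableSpace Ω]
    (μ : Measure Ω) [IsProbabilityMeasure μ] (ε : Ω → ℝ) (hmeas : Measurable ε)
    (hint : Integrable (fun ω => (ε ω) ^ 2) μ)
    (τ : ℝ) (hτ : τ ∈ Set.Ioo (0 : ℝ) 1)
    (hexp : (∫ ω, g τ (ε ω) ∂μ) = 0)
    (hzero : μ {ω | ε ω = 0} = 0)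
    (hcont : ContinuousAt (fun t : ℝ => (μ {ω | ε ω ≤ t}).toReal) 0) :
    (fun t : ℝ => (∫ ω, rho τ (ε ω - t) ∂μ) - (∫ ω, rho τ (ε ω) ∂μ)
        - (1 / 2) * (∫ ω, h τ (ε ω) ∂μ) * t ^ 2)
      =o[nhds 0] fun t : ℝ => t ^ 2 :=
  expected_loss_second_order_general μ ε hmeas hint τ hτ hexp hzero
end
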